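/- ∑_{k=1}^∞ (8/3)^k / (k · C(3k,k)) = (2√3·π)/7 − (2/7)·log 3. -/

import Mathlib

/-!
By the Beta integral, `1 / ((k + 1) * C(3k + 3, k + 1)) = ∫₀¹ t^k (1 - t)^(2k + 2) dt`. Since
`t (1 - t)² ≤ 4/27` on `[0, 1]`, the series `∑ x^(k+1) t^k (1 - t)^(2k+2)` is a dominated geometric
series for `|x| < 27/4`, so summing under the integral gives
`∑ x^(k+1) / ((k + 1) C(3k + 3, k + 1)) = ∫₀¹ x (1 - t)² / (1 - x t (1 - t)²) dt`.
For `x = 8/3` the denominator factors as `(3 - 2t)(4t² - 2t + 1) / 3`, and partial fractions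
give an elementary primitive made of two logarithms and an arctangent.
-/

open Real MeasureTheory Set
open scoped Nat Interval

theorem integral_pow_mul_one_sub_pow (a b : ℕ) :
    ∫ t in (0 : ℝ)..1, t ^ a * (1 - t) ^ b = (a ! * b ! : ℝ) / (a + b + 1)! := by
  have h := Complex.Gamma_mul_Gamma_eq_betaIntegral
    (s := (a : ℂ) + 1) (t := (b : ℂ) + 1) (by simp; positivity) (by simp; positivity)
  have hab : (a : ℂ) + 1 + ((b : ℂ) + 1) = ((a + b + 1 : ℕ) : ℂ) + 1 := by push_cast; ring
  have hbeta : Complex.betaIntegral ((a : ℂ) + 1) ((b : ℂ) + 1) =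
      ((∫ t in (0 : ℝ)..1, t ^ a * (1 - t) ^ b : ℝ) : ℂ) := by
    rw [Complex.betaIntegral, ← intervalIntegral.integral_ofReal]
    refine intervalIntegral.integral_congr fun t _ => ?_
    simp only [add_sub_cancel_right, Complex.cpow_natCast]
    push_cast
    rfl
  rw [hab, Complex.Gamma_nat_eq_factorial, Complex.Gamma_nat_eq_factorial,
    Complex.Gamma_nat_eq_factorial, hbeta] at h
  rw [eq_div_iff (by positivity), mul_comm]
  exact_mod_cast h.symm

theorem integral_pow_mul_one_sub_pow_eq_inv_mul_choose (a b : ℕ) :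
    ∫ t in (0 : ℝ)..1, t ^ a * (1 - t) ^ b = 1 / ((a + 1) * ((a + b + 1).choose (a + 1) : ℝ)) := by
  have h := Nat.add_choose_mul_factorial_mul_factorial b (a + 1)
  rw [show b + (a + 1) = a + b + 1 by ring, Nat.factorial_succ] at h
  have hc : 0 < (a + b + 1).choose (a + 1) := Nat.choose_pos (by omega)
  rw [integral_pow_mul_one_sub_pow, div_eq_div_iff (by positivity) (by positivity), ← h]
  push_cast
  ring

theorem mul_one_sub_sq_le {t : ℝ} (ht : t ∈ Icc (0 : ℝ) 1) : t * (1 - t) ^ 2 ≤ 4 / 27 := by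
  nlinarith [sq_nonneg (3 * t - 1), ht.1, ht.2]

theorem integral_mul_geometric_eq_div_choose (x : ℝ) (k : ℕ) :
    ∫ t in (0 : ℝ)..1, x * (1 - t) ^ 2 * (x * (t * (1 - t) ^ 2)) ^ k =
      x ^ (k + 1) / (((k : ℝ) + 1) * ((3 * (k + 1)).choose (k + 1) : ℕ)) := by
  have hpow : ∀ t : ℝ, x * (1 - t) ^ 2 * (x * (t * (1 - t) ^ 2)) ^ k =
      x ^ (k + 1) * (t ^ k * (1 - t) ^ (2 * k + 2)) := fun t => by
    rw [mul_pow, mul_pow, ← pow_mul]; ring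
  simp_rw [hpow, intervalIntegral.integral_const_mul,
    integral_pow_mul_one_sub_pow_eq_inv_mul_choose, show k + (2 * k + 2) + 1 = 3 * (k + 1) by ring]
  ring

theorem hasSum_pow_div_mul_choose {x : ℝ} (hx : |x| < 27 / 4) :
    HasSum (fun k : ℕ => x ^ (k + 1) / (((k : ℝ) + 1) * ((3 * (k + 1)).choose (k + 1) : ℕ)))
      (∫ t in (0 : ℝ)..1, x * (1 - t) ^ 2 / (1 - x * (t * (1 - t) ^ 2))) := by
  set ρ := |x| * (4 / 27) with hρ_def
  have hρ : ρ < 1 := by rw [hρ_def]; linarith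
  have hratio : ∀ t ∈ Ι (0 : ℝ) 1, ‖x * (t * (1 - t) ^ 2)‖ ≤ ρ := fun t ht => by
    rw [uIoc_of_le zero_le_one] at ht
    have h0 : 0 ≤ t * (1 - t) ^ 2 := mul_nonneg ht.1.le (sq_nonneg _)
    rw [norm_mul, Real.norm_of_nonneg h0]
    exact mul_le_mul_of_nonneg_left (mul_one_sub_sq_le (Ioc_subset_Icc_self ht)) (abs_nonneg x)
  simp_rw [← integral_mul_geometric_eq_div_choose]
  refine intervalIntegral.hasSum_integral_of_dominated_convergence (fun k _ => |x| * ρ ^ k)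
    (fun k => by fun_prop) (fun k => ae_of_all _ fun t ht => ?_)
    (ae_of_all _ fun t _ => ((summable_geometric_of_lt_one (by positivity) hρ).mul_left |x|))
    intervalIntegrable_const (ae_of_all _ fun t ht => ?_)
  · have hsq : ‖1 - t‖ ^ 2 ≤ 1 := by
      rw [uIoc_of_le zero_le_one] at ht
      rw [Real.norm_eq_abs]
      exact pow_le_one₀ (abs_nonneg _) (abs_le.2 ⟨by linarith [ht.2], by linarith [ht.1]⟩)
    calc ‖x * (1 - t) ^ 2 * (x * (t * (1 - t) ^ 2)) ^ k‖
        = ‖x‖ * ‖1 - t‖ ^ 2 * ‖x * (t * (1 - t) ^ 2)‖ ^ k := by simp only [norm_mul, norm_pow]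
      _ ≤ ‖x‖ * 1 * ρ ^ k := by gcongr; exact hratio t ht
      _ = |x| * ρ ^ k := by rw [mul_one, Real.norm_eq_abs]
  · simp_rw [div_eq_mul_inv]
    exact (hasSum_geometric_of_norm_lt_one ((hratio t ht).trans_lt hρ)).mul_left _

-- Partial fractions: `1 - 8/3 t (1 - t)² = (3 - 2t)(4t² - 2t + 1) / 3`.
noncomputable def eightThirdsPrimitive (t : ℝ) : ℝ :=
  -(1 / 7) * log (3 - 2 * t) - 3 / 7 * log (4 * t ^ 2 - 2 * t + 1)
    + 4 * √3 / 7 * arctan ((4 * t - 1) / √3)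

theorem hasDerivAt_eightThirdsPrimitive {t : ℝ} (ht : t < 3 / 2) :
    HasDerivAt eightThirdsPrimitive (8 / 3 * (1 - t) ^ 2 / (1 - 8 / 3 * (t * (1 - t) ^ 2))) t := by
  have hlin : 3 - 2 * t ≠ 0 := by linarith
  have hquad : 4 * t ^ 2 - 2 * t + 1 ≠ 0 := by nlinarith [sq_nonneg (4 * t - 1)]
  have hs : √3 ^ 2 = 3 := sq_sqrt (by norm_num)
  have h1 : HasDerivAt (fun t => log (3 - 2 * t)) (-2 / (3 - 2 * t)) t := by
    simpa using (((hasDerivAt_id' t).const_mul 2).const_sub 3).log hlin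
  have h2 : HasDerivAt (fun t => log (4 * t ^ 2 - 2 * t + 1))
      ((8 * t - 2) / (4 * t ^ 2 - 2 * t + 1)) t := by
    refine (((((hasDerivAt_pow 2 t).const_mul 4).sub
      ((hasDerivAt_id' t).const_mul 2)).add_const 1).log hquad).congr_deriv ?_
    simp only [Pi.sub_apply]
    ring
  have h3 : HasDerivAt (fun t => arctan ((4 * t - 1) / √3))
      (1 / (1 + ((4 * t - 1) / √3) ^ 2) * (4 / √3)) t := by
    simpa using ((((hasDerivAt_id' t).const_mul 4).sub_const 1).div_const √3).arctan
  refine (((h1.const_mul (-(1 / 7))).sub (h2.const_mul (3 / 7))).add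
    (h3.const_mul (4 * √3 / 7))).congr_deriv ?_
  rw [show 1 - 8 / 3 * (t * (1 - t) ^ 2) = (3 - 2 * t) * (4 * t ^ 2 - 2 * t + 1) / 3 by ring,
    div_pow, hs, show 1 + (4 * t - 1) ^ 2 / 3 = 4 * (4 * t ^ 2 - 2 * t + 1) / 3 by ring]
  set q := 4 * t ^ 2 - 2 * t + 1 with hq
  field_simp
  rw [hq]
  ring

theorem eightThirdsPrimitive_one_sub_zero :
    eightThirdsPrimitive 1 - eightThirdsPrimitive 0 = 2 * √3 * π / 7 - 2 / 7 * log 3 := by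
  have h1 : (4 * (1 : ℝ) - 1) / √3 = √3 := by
    rw [div_eq_iff (by positivity), mul_self_sqrt (by norm_num)]; norm_num
  have h0 : (4 * (0 : ℝ) - 1) / √3 = -(1 / √3) := by ring
  have hπ3 : arctan √3 = π / 3 := by
    rw [← tan_pi_div_three, arctan_tan] <;> linarith [pi_pos]
  have hπ6 : arctan (1 / √3) = π / 6 := by
    rw [← tan_pi_div_six, arctan_tan] <;> linarith [pi_pos]
  simp only [eightThirdsPrimitive, h1, h0, arctan_neg, hπ3, hπ6]
  norm_num
  ring

theorem integral_eightThirds :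
    ∫ t in (0 : ℝ)..1, 8 / 3 * (1 - t) ^ 2 / (1 - 8 / 3 * (t * (1 - t) ^ 2)) =
      2 * √3 * π / 7 - 2 / 7 * log 3 := by
  rw [← eightThirdsPrimitive_one_sub_zero]
  refine intervalIntegral.integral_eq_sub_of_hasDerivAt (fun t ht => ?_) ?_
  · rw [uIcc_of_le zero_le_one] at ht
    exact hasDerivAt_eightThirdsPrimitive (by linarith [ht.2])
  · refine ContinuousOn.intervalIntegrable (ContinuousOn.div (by fun_prop) (by fun_prop) ?_)
    intro t ht
    rw [uIcc_of_le zero_le_one] at ht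
    nlinarith [mul_one_sub_sq_le ht]

theorem stmt_4 :
    ∑' k : ℕ, (8/3 : ℝ)^(k+1) / ((((k:ℝ)+1)) * (((3*(k+1)).choose (k+1) : ℕ) : ℝ)) =
    (2*Real.sqrt 3*π)/7 - (2/7)*Real.log 3 := by
  rw [(hasSum_pow_div_mul_choose (by norm_num [abs_of_pos])).tsum_eq, integral_eightThirds]
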